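/- arXiv:2502.14377 — 2 statements merged into one kernel-verified Lean document; each statement's English description precedes it below -/
import Mathlib

section
/- Let H, W, d be positive integers with H·W·d ≥ 2, and set M = W·d. Let t_h, t_w be natural numbers with t_h ≤ H−1 and t_w ≤ M−1. Define the expected interactive distance D = (1/(H·M − 1)) · Σ_{h=0}^{H−1} Σ_{w=0}^{M−1} √((h − t_h)² + (w − t_w)²), where the subtractions, squares and square root are taken in the real numbers. Then D ≥ (√2 / (4·(H·M − 1))) · [ H·t_w·(t_w + 1) + M·t_h·(t_h + 1) + H·(M − t_w)·(M − t_w − 1) + M·(H − t_h)·(H − t_h − 1) ]. -/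
lemma sum_abs_closed (t H : ℕ) (ht : t < H) :
    ∑ x ∈ Finset.range H, |(x : ℝ) - t| =
      ((t : ℝ) * (t + 1) + ((H : ℝ) - t) * ((H : ℝ) - t - 1)) / 2 := by
  induction H, ht using Nat.le_induction with
  | base =>
    have h1 : ∑ x ∈ Finset.range (t + 1), |(x : ℝ) - t|
        = ∑ x ∈ Finset.range (t + 1), ((t : ℝ) - x) := by
      apply Finset.sum_congr rfl
      intro x hx
      rw [Finset.mem_range] at hx
      rw [abs_sub_comm, abs_of_nonneg]
      have : (x : ℝ) ≤ t := by exact_mod_cast Nat.lt_succ_iff.mp hx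
      linarith
    have h2 : ((∑ x ∈ Finset.range (t + 1), x : ℕ) : ℝ) * 2 = ((t + 1) * t : ℕ) := by
      exact_mod_cast congrArg (Nat.cast : ℕ → ℝ)
        (by simpa using Finset.sum_range_id_mul_two (t + 1))
    rw [h1, Finset.sum_sub_distrib, Finset.sum_const, Finset.card_range, nsmul_eq_mul]
    push_cast
    push_cast at h2
    nlinarith [h2]
  | succ n hn ih =>
    rw [Finset.sum_range_succ, ih]
    have habs : |(n : ℝ) - t| = (n : ℝ) - t := by
      rw [abs_of_nonneg]
      have : (t : ℝ) ≤ n := by exact_mod_cast Nat.le_of_succ_le hn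
      linarith
    rw [habs]
    push_cast
    ring

lemma pointwise_bound (a b : ℝ) :
    Real.sqrt 2 / 2 * (|a| + |b|) ≤ Real.sqrt (a ^ 2 + b ^ 2) := by
  have hx : (0:ℝ) ≤ Real.sqrt 2 / 2 * (|a| + |b|) := by positivity
  rw [show (Real.sqrt 2 / 2 * (|a| + |b|)) = Real.sqrt ((Real.sqrt 2 / 2 * (|a| + |b|))^2)
    from (Real.sqrt_sq hx).symm]
  apply Real.sqrt_le_sqrt
  have hs : Real.sqrt 2 ^ 2 = 2 := Real.sq_sqrt (by norm_num)
  nlinarith [sq_abs a, sq_abs b, sq_nonneg (|a| - |b|), Real.sqrt_nonneg 2]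

/-- Theorem 3.4: lower bound on the expected interactive distance. -/
theorem expected_interactive_distance_lower_bound
    (H W d : ℕ) (hH : 0 < H) (hW : 0 < W) (hd : 0 < d)
    (hHWd : 2 ≤ H * W * d) (M : ℕ) (hM : M = W * d)
    (t_h t_w : ℕ) (hth : t_h ≤ H - 1) (htw : t_w ≤ M - 1)
    (D : ℝ)
    (hD : D = (1 / ((H : ℝ) * (M : ℝ) - 1)) *
      ∑ h ∈ Finset.range H, ∑ w ∈ Finset.range M,
        Real.sqrt (((h : ℝ) - (t_h : ℝ)) ^ 2 + ((w : ℝ) - (t_w : ℝ)) ^ 2)) :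
    D ≥ (Real.sqrt 2 / (4 * ((H : ℝ) * (M : ℝ) - 1))) *
      ((H : ℝ) * (t_w : ℝ) * ((t_w : ℝ) + 1) +
       (M : ℝ) * (t_h : ℝ) * ((t_h : ℝ) + 1) +
       (H : ℝ) * ((M : ℝ) - (t_w : ℝ)) * ((M : ℝ) - (t_w : ℝ) - 1) +
       (M : ℝ) * ((H : ℝ) - (t_h : ℝ)) * ((H : ℝ) - (t_h : ℝ) - 1)) := by
  have hM0 : 0 < M := by rw [hM]; exact Nat.mul_pos hW hd
  have hHM : 2 ≤ H * M := by rw [hM, ← Nat.mul_assoc]; exact hHWd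
  have hHMr : (2:ℝ) ≤ (H : ℝ) * (M : ℝ) := by exact_mod_cast hHM
  have hpos : (0:ℝ) < (H : ℝ) * (M : ℝ) - 1 := by linarith
  have hthH : t_h < H := by omega
  have htwM : t_w < M := by omega
  have hA := sum_abs_closed t_h H hthH
  have hB := sum_abs_closed t_w M htwM
  -- lower bound each summand
  have hstep : ∑ h ∈ Finset.range H, ∑ w ∈ Finset.range M,
      (Real.sqrt 2 / 2 * (|(h : ℝ) - t_h| + |(w : ℝ) - t_w|)) ≤
      ∑ h ∈ Finset.range H, ∑ w ∈ Finset.range M,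
        Real.sqrt (((h : ℝ) - (t_h : ℝ)) ^ 2 + ((w : ℝ) - (t_w : ℝ)) ^ 2) := by
    refine Finset.sum_le_sum fun h _ => Finset.sum_le_sum fun w _ => ?_
    exact pointwise_bound _ _
  -- evaluate the lower-bounding sum
  have hval : ∑ h ∈ Finset.range H, ∑ w ∈ Finset.range M,
      (Real.sqrt 2 / 2 * (|(h : ℝ) - t_h| + |(w : ℝ) - t_w|)) =
      Real.sqrt 2 / 2 * ((M : ℝ) * (∑ h ∈ Finset.range H, |(h : ℝ) - t_h|)
        + (H : ℝ) * (∑ w ∈ Finset.range M, |(w : ℝ) - t_w|)) := by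
    simp only [← Finset.mul_sum, Finset.sum_add_distrib, Finset.sum_const,
      Finset.card_range, nsmul_eq_mul]
    try rw [← Finset.sum_add_distrib, Finset.sum_add_distrib, Finset.sum_const,
      Finset.card_range, nsmul_eq_mul, ← Finset.mul_sum]
    try ring
  rw [hD, ge_iff_le]
  have key : Real.sqrt 2 / (4 * ((H : ℝ) * (M : ℝ) - 1)) *
      ((H : ℝ) * (t_w : ℝ) * ((t_w : ℝ) + 1) +
       (M : ℝ) * (t_h : ℝ) * ((t_h : ℝ) + 1) +
       (H : ℝ) * ((M : ℝ) - (t_w : ℝ)) * ((M : ℝ) - (t_w : ℝ) - 1) +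
       (M : ℝ) * ((H : ℝ) - (t_h : ℝ)) * ((H : ℝ) - (t_h : ℝ) - 1)) =
      (1 / ((H : ℝ) * (M : ℝ) - 1)) *
      (Real.sqrt 2 / 2 * ((M : ℝ) * (((t_h : ℝ) * (t_h + 1) + ((H : ℝ) - t_h) * ((H : ℝ) - t_h - 1)) / 2)
        + (H : ℝ) * (((t_w : ℝ) * (t_w + 1) + ((M : ℝ) - t_w) * ((M : ℝ) - t_w - 1)) / 2))) := by
    field_simp
    ring
  rw [key]
  apply mul_le_mul_of_nonneg_left _ (by positivity)
  rw [← hA, ← hB, ← hval]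
  exact hstep
end

section
/- Let H, W, d be positive integers with H·W·d ≥ 2, and set M = W·d. Let t_h, t_w be natural numbers with t_h ≤ H − 1 and t_w ≤ M − 1. Define the expected interactive distance D = (1/(H·M − 1)) · Σ_{h=0}^{H−1} Σ_{w=0}^{M−1} √((h − t_h)² + (w − t_w)²), where the arithmetic is in the real numbers. Then D ≥ (√2/8)·(H + M). In particular, the expected interactive distance grows at least linearly in H + W·d, uniformly over the token position (t_h, t_w). -/
open Finset

lemma f_lower (n : ℕ) :
    ((n:ℝ)^2 - 1) / 2 ≤ ∑ h ∈ range n, |(n:ℝ) - 1 - 2*h| := by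
  induction n using Nat.strong_induction_on with
  | _ n ih =>
    match n with
    | 0 => norm_num
    | 1 => norm_num
    | (n+2) =>
      have h1 := ih n (by omega)
      have key : ∑ h ∈ range (n+2), |((n+2:ℕ):ℝ) - 1 - 2*h|
          = (∑ h ∈ range n, |(n:ℝ) - 1 - 2*h|) + 2*((n:ℝ)+1) := by
        rw [Finset.sum_range_succ, Finset.sum_range_succ']
        have e1 : ∀ h ∈ range n,
            |((n+2:ℕ):ℝ) - 1 - 2*((h:ℕ)+1:ℕ)| = |(n:ℝ) - 1 - 2*h| := by
          intro h _; congr 1; push_cast; ring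
        rw [Finset.sum_congr rfl e1]
        have e2 : |((n+2:ℕ):ℝ) - 1 - 2*((0:ℕ):ℝ)| = (n:ℝ)+1 := by
          push_cast
          rw [show ((n:ℝ)+2) - 1 - 2*0 = (n:ℝ)+1 by ring,
            abs_of_nonneg (by positivity)]
        have e3 : |((n+2:ℕ):ℝ) - 1 - 2*((n+1:ℕ):ℝ)| = (n:ℝ)+1 := by
          push_cast
          rw [show ((n:ℝ)+2) - 1 - 2*((n:ℝ)+1) = -((n:ℝ)+1) by ring,
            abs_neg, abs_of_nonneg (by positivity)]
        rw [e2, e3]; ring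
      rw [key]; push_cast; nlinarith [h1]

lemma abs_sum_lower (n : ℕ) (t : ℝ) :
    ((n:ℝ)^2 - 1) / 4 ≤ ∑ h ∈ range n, |(h:ℝ) - t| := by
  have srefl : ∑ h ∈ range n, |(((n - 1 - h : ℕ)):ℝ) - t|
      = ∑ h ∈ range n, |(h:ℝ) - t| := Finset.sum_range_reflect (fun h => |(h:ℝ) - t|) n
  have key : ∑ h ∈ range n, |(n:ℝ) - 1 - 2*h|
      ≤ 2 * ∑ h ∈ range n, |(h:ℝ) - t| := by
    rw [two_mul]
    nth_rewrite 2 [← srefl]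
    rw [← Finset.sum_add_distrib]
    apply Finset.sum_le_sum
    intro h hh
    have hhn : h < n := Finset.mem_range.mp hh
    have hc : (((n - 1 - h : ℕ)):ℝ) = (n:ℝ) - 1 - h := by
      have e : n - 1 - h + (1 + h) = n := by omega
      have e2 := congrArg (Nat.cast : ℕ → ℝ) e
      push_cast at e2; linarith
    have := abs_sub (G := ℝ) ((h:ℝ) - t) (((n:ℝ) - 1 - h) - t)
    calc |(n:ℝ) - 1 - 2*h| = |((h:ℝ) - t) - (((n:ℝ) - 1 - h) - t)| := by
            rw [abs_sub_comm]; congr 1; ring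
      _ ≤ |(h:ℝ) - t| + |((n:ℝ) - 1 - h) - t| := abs_sub _ _
      _ = |(h:ℝ) - t| + |(((n - 1 - h : ℕ)):ℝ) - t| := by rw [hc]
  have := f_lower n
  linarith

lemma sqrt_lb (a b : ℝ) : (|a| + |b|) / Real.sqrt 2 ≤ Real.sqrt (a^2 + b^2) := by
  rw [div_le_iff₀ (by positivity)]
  rw [← Real.sqrt_mul (by positivity)]
  calc |a| + |b| = Real.sqrt ((|a| + |b|)^2) := (Real.sqrt_sq (by positivity)).symm
    _ ≤ Real.sqrt ((a^2+b^2) * 2) := by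
        apply Real.sqrt_le_sqrt
        nlinarith [sq_nonneg (|a| - |b|), sq_abs a, sq_abs b]

/-- Position-independent linear growth of the expected interactive distance. -/
theorem expected_interactive_distance_linear_growth
    (H W d : ℕ) (hH : 0 < H) (hW : 0 < W) (hd : 0 < d)
    (hHWd : 2 ≤ H * W * d) (M : ℕ) (hM : M = W * d)
    (t_h t_w : ℕ) (hth : t_h ≤ H - 1) (htw : t_w ≤ M - 1)
    (D : ℝ)
    (hD : D = (1 / ((H : ℝ) * (M : ℝ) - 1)) *
      ∑ h ∈ Finset.range H, ∑ w ∈ Finset.range M,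
        Real.sqrt (((h : ℝ) - (t_h : ℝ)) ^ 2 + ((w : ℝ) - (t_w : ℝ)) ^ 2)) :
    D ≥ (Real.sqrt 2 / 8) * ((H : ℝ) + (M : ℝ)) := by
  have h2 : Real.sqrt 2 * Real.sqrt 2 = 2 := Real.mul_self_sqrt (by norm_num)
  have s2 : (0:ℝ) < Real.sqrt 2 := by positivity
  have hHMnat : 2 ≤ H * M := by rw [hM, ← mul_assoc]; exact hHWd
  have hHM : (2:ℝ) ≤ (H:ℝ) * (M:ℝ) := by exact_mod_cast hHMnat
  have hpos : (0:ℝ) < (H:ℝ) * (M:ℝ) - 1 := by linarith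
  have hH1 : (1:ℝ) ≤ (H:ℝ) := by exact_mod_cast hH
  have hM1 : (1:ℝ) ≤ (M:ℝ) := by
    have : 0 < M := by rw [hM]; positivity
    exact_mod_cast this
  set S := ∑ h ∈ Finset.range H, ∑ w ∈ Finset.range M,
      Real.sqrt (((h : ℝ) - (t_h : ℝ)) ^ 2 + ((w : ℝ) - (t_w : ℝ)) ^ 2) with hSdef
  have step1 : ∑ h ∈ Finset.range H, ∑ w ∈ Finset.range M,
      ((|(h:ℝ) - t_h| + |(w:ℝ) - t_w|) / Real.sqrt 2) ≤ S := by
    apply Finset.sum_le_sum; intro h _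
    apply Finset.sum_le_sum; intro w _
    exact sqrt_lb _ _
  have step2 : ∑ h ∈ Finset.range H, ∑ w ∈ Finset.range M,
      ((|(h:ℝ) - t_h| + |(w:ℝ) - t_w|) / Real.sqrt 2)
      = ((M:ℝ) * ∑ h ∈ Finset.range H, |(h:ℝ) - t_h|
        + (H:ℝ) * ∑ w ∈ Finset.range M, |(w:ℝ) - t_w|) / Real.sqrt 2 := by
    simp only [← Finset.sum_div]
    congr 1
    simp only [Finset.sum_add_distrib, Finset.sum_const, Finset.card_range,
      nsmul_eq_mul, ← Finset.mul_sum]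
  have bh := abs_sum_lower H (t_h : ℝ)
  have bw := abs_sum_lower M (t_w : ℝ)
  have key : ((H:ℝ) + M) * ((H:ℝ) * M - 1) / 4 / Real.sqrt 2 ≤ S := by
    refine le_trans ?_ step1
    rw [step2]
    gcongr
    nlinarith [bh, bw, hH1, hM1]
  have e : Real.sqrt 2 / 8 * ((H:ℝ) + M)
      = (1 / ((H:ℝ) * M - 1)) * (((H:ℝ) + M) * ((H:ℝ) * M - 1) / 4 / Real.sqrt 2) := by
    field_simp
    nlinarith [h2]
  rw [hD, ge_iff_le, e]
  gcongr
end
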